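/- arXiv:1110.1433 — 2 statements merged into one kernel-verified Lean document; each statement's English description precedes it below -/
import Mathlib

section
/- Let Λ be a k-graph and λ ∈ Q_r(Λ) an r-cube (a morphism with degree ≤ (1,…,1) and |d(λ)| = r). Then for all 1 ≤ i < j ≤ r and ℓ, m ∈ {0,1}, the face maps satisfy F_i^ℓ(F_j^m(λ)) = F_{j-1}^m(F_i^ℓ(λ)). -/
namespace KGH

/-- A `k`-graph: a (small, nonempty) category with a degree functor `d : Λ → ℕ^k`
satisfying the unique factorisation property.  Composition `comp f g` is the paper's
`f g`, defined when `s(f) = r(g)`, i.e. `dom f = cod g`. -/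
structure KGraph (k : ℕ) where
  Obj : Type
  Mor : Type
  dom : Mor → Obj
  cod : Mor → Obj
  idm : Obj → Mor
  comp : Mor → Mor → Mor
  d : Mor → Fin k → ℕ
  nonempty : Nonempty Obj
  dom_idm : ∀ o, dom (idm o) = o
  cod_idm : ∀ o, cod (idm o) = o
  d_idm : ∀ o, d (idm o) = 0
  dom_comp : ∀ f g, dom f = cod g → dom (comp f g) = dom g
  cod_comp : ∀ f g, dom f = cod g → cod (comp f g) = cod f
  d_comp : ∀ f g, dom f = cod g → d (comp f g) = d f + d g
  idm_comp : ∀ f, comp (idm (cod f)) f = f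
  comp_idm : ∀ f, comp f (idm (dom f)) = f
  comp_assoc : ∀ f g h, dom f = cod g → dom g = cod h →
      comp (comp f g) h = comp f (comp g h)
  factor : ∀ f (m n : Fin k → ℕ), d f = m + n →
      ∃! p : Mor × Mor, dom p.1 = cod p.2 ∧ d p.1 = m ∧ d p.2 = n ∧ comp p.1 p.2 = f

namespace KGraph

variable {k : ℕ}

/-- the total degree `|λ|` of a morphism. -/
def deg (Λ : KGraph k) (f : Λ.Mor) : ℕ := ∑ i, Λ.d f i

/-- split `f` as `f = p.1 p.2` with `d p.1 = m` (junk value if `m ≰ d f`). -/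
noncomputable def splitAt (Λ : KGraph k) (f : Λ.Mor) (m : Fin k → ℕ) : Λ.Mor × Λ.Mor :=
  if h : Λ.d f = m + (Λ.d f - m) then Classical.choose (Λ.factor f m (Λ.d f - m) h)
  else (f, f)

/-- the factorisation segment `λ(m,n)`. -/
noncomputable def seg (Λ : KGraph k) (f : Λ.Mor) (m n : Fin k → ℕ) : Λ.Mor :=
  (Λ.splitAt (Λ.splitAt f m).2 (n - m)).1

/-- the (sorted) list of coordinates in which `f` has nonzero degree. -/
noncomputable def suppList (Λ : KGraph k) (f : Λ.Mor) : List (Fin k) :=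
  (Finset.univ.filter fun i => Λ.d f i ≠ 0).sort (· ≤ ·)

/-- the face maps `F_j^ℓ` (`j` is 1-based; `ℓ = false` is `F_j^0`, `ℓ = true` is `F_j^1`). -/
noncomputable def face (Λ : KGraph k) (j : ℕ) (ℓ : Bool) (f : Λ.Mor) : Λ.Mor :=
  match (Λ.suppList f)[j-1]? with
  | none => f
  | some i =>
    if ℓ then Λ.seg f (Pi.single i 1) (Λ.d f)
    else Λ.seg f 0 (Λ.d f - Pi.single i 1)

/-- `Q_r(Λ)`, the set of `r`-cubes: morphisms of degree `≤ 1_k` with `|d λ| = r`. -/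
def QSet (Λ : KGraph k) (r : ℕ) : Set Λ.Mor :=
  {f | (∀ i, Λ.d f i ≤ 1) ∧ Λ.deg f = r}

/-- the (total) group of chains. -/
abbrev Chain (Λ : KGraph k) : Type := Λ.Mor →₀ ℤ

/-- the boundary of a generator: `∂ λ = Σ_{ℓ,i} (-1)^{i+ℓ} F_i^ℓ(λ)`. -/
noncomputable def bdFun (Λ : KGraph k) (f : Λ.Mor) : Λ.Chain :=
  ∑ j ∈ Finset.range (Λ.deg f),
    ((-1 : ℤ) ^ (j + 1) • Finsupp.single (Λ.face (j+1) false f) (1 : ℤ)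
      + (-1 : ℤ) ^ j • Finsupp.single (Λ.face (j+1) true f) (1 : ℤ))

/-- the boundary map `∂` on chains. -/
noncomputable def bd (Λ : KGraph k) : Λ.Chain →ₗ[ℤ] Λ.Chain :=
  Finsupp.lift Λ.Chain ℤ Λ.Mor Λ.bdFun

/-- `C_r(Λ) = ℤ Q_r(Λ)`, as the submodule of chains supported on `Q_r(Λ)`. -/
noncomputable def CS (Λ : KGraph k) (r : ℕ) : Submodule ℤ Λ.Chain :=
  Finsupp.supported ℤ ℤ (Λ.QSet r)

/-- the `r`-cycles `ker ∂_r`. -/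
noncomputable def cycles (Λ : KGraph k) (r : ℕ) : Submodule ℤ Λ.Chain :=
  Λ.CS r ⊓ LinearMap.ker Λ.bd

/-- the `r`-boundaries `im ∂_{r+1}`. -/
noncomputable def bdries (Λ : KGraph k) (r : ℕ) : Submodule ℤ Λ.Chain :=
  (Λ.CS (r+1)).map Λ.bd

/-- the homology `H_r(Λ) = ker ∂_r / im ∂_{r+1}`. -/
noncomputable abbrev H (Λ : KGraph k) (r : ℕ) :=
  Λ.cycles r ⧸ ((Λ.bdries r).comap (Λ.cycles r).subtype)

/-- the relation `{(r(λ), s(λ))}` on vertices. -/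
def rel (Λ : KGraph k) : Λ.Obj → Λ.Obj → Prop :=
  fun u v => ∃ f : Λ.Mor, Λ.cod f = u ∧ Λ.dom f = v

/-- connectedness: the equivalence relation generated by `rel` is total. -/
def Connected (Λ : KGraph k) : Prop :=
  ∀ u v : Λ.Obj, Relation.EqvGen Λ.rel u v

/-- the setoid of connected components. -/
def compSetoid (Λ : KGraph k) : Setoid Λ.Obj :=
  ⟨Relation.EqvGen Λ.rel, Relation.EqvGen.is_equivalence _⟩

/-- `s(f, m)` for an orientation `m ∈ {1, -1}`. -/
def sV (Λ : KGraph k) (f : Λ.Mor) (m : ℤ) : Λ.Obj :=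
  if m = 1 then Λ.dom f else Λ.cod f

/-- `r(f, m) = s(f, -m)`. -/
def rV (Λ : KGraph k) (f : Λ.Mor) (m : ℤ) : Λ.Obj := Λ.sV f (-m)

/-- an undirected path: a sequence of edges with orientations whose endpoints match. -/
def IsUPath (Λ : KGraph k) (n : ℕ) (g : Fin n → Λ.Mor) (m : Fin n → ℤ) : Prop :=
  (∀ i, g i ∈ Λ.QSet 1) ∧ (∀ i, m i = 1 ∨ m i = -1) ∧
  ∀ (i : ℕ) (h : i + 1 < n),
    Λ.sV (g ⟨i, Nat.lt_of_succ_lt h⟩) (m ⟨i, Nat.lt_of_succ_lt h⟩) =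
    Λ.rV (g ⟨i+1, h⟩) (m ⟨i+1, h⟩)

/-- the source of an undirected path. -/
def pathSrc (Λ : KGraph k) {n : ℕ} (g : Fin (n+1) → Λ.Mor) (m : Fin (n+1) → ℤ) : Λ.Obj :=
  Λ.sV (g (Fin.last n)) (m (Fin.last n))

/-- the range of an undirected path. -/
def pathRng (Λ : KGraph k) {n : ℕ} (g : Fin (n+1) → Λ.Mor) (m : Fin (n+1) → ℤ) : Λ.Obj :=
  Λ.rV (g 0) (m 0)

/-- the trail `Σᵢ mᵢ gᵢ` of an undirected path. -/
noncomputable def trailOf (Λ : KGraph k) {n : ℕ} (g : Fin n → Λ.Mor) (m : Fin n → ℤ) :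
    Λ.Chain :=
  ∑ i, m i • Finsupp.single (g i) (1 : ℤ)

/-- `h` is a simple closed trail. -/
def IsSimpleClosedTrail (Λ : KGraph k) (h : Λ.Chain) : Prop :=
  ∃ (n : ℕ) (g : Fin (n+1) → Λ.Mor) (m : Fin (n+1) → ℤ),
    Λ.IsUPath (n+1) g m ∧ Λ.pathSrc g m = Λ.pathRng g m ∧
    Function.Injective (fun i => Λ.sV (g i) (m i)) ∧
    h = Λ.trailOf g m

end KGraph

end KGH

/-!
Every morphism factorises uniquely, so a segment `λ(m, m + n)` is characterised as the middle
factor `g` of some factorisation `λ = x g y` with `d x = m`, `d g = n`.  Hence a segment of a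
segment is a segment: `λ(m, m + n)(m', m' + n') = λ(m + m', m + m' + n')`.  The face of a cube in
direction `b` is the segment starting at `ℓ e_b` of length `d λ - e_b`, so taking faces in two
distinct directions `a ≠ b` in either order gives the same segment of `λ`, starting at
`ℓ e_a + m e_b` with length `d λ - e_a - e_b`.  What is left is index bookkeeping: removing the
`j`-th direction of a cube shifts the later directions down by one and keeps the earlier ones.
-/

theorem Finset.sort_erase {α : Type*} [DecidableEq α] (r : α → α → Prop) [DecidableRel r]
    [IsTrans α r] [Std.Antisymm r] [Std.Total r] (s : Finset α) (a : α) :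
    (s.erase a).sort r = (s.sort r).erase a := by
  have hnd : ((s.sort r).erase a).Nodup := (s.sort_nodup r).erase a
  have hset : ((s.sort r).erase a).toFinset = s.erase a := by
    ext x
    rw [List.mem_toFinset, (s.sort_nodup r).mem_erase_iff, Finset.mem_sort, Finset.mem_erase]
  rw [← hset]
  exact (List.toFinset_sort r hnd).2 ((s.pairwise_sort r).erase a)

theorem Pi.single_one_add_single_one_le {ι : Type*} [DecidableEq ι] {D : ι → ℕ} {a b : ι}
    (hab : a ≠ b) (ha : D a ≠ 0) (hb : D b ≠ 0) : Pi.single a 1 + Pi.single b 1 ≤ D := by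
  intro i
  rcases eq_or_ne i a with rfl | hia
  · simpa [hab] using Nat.one_le_iff_ne_zero.2 ha
  · rcases eq_or_ne i b with rfl | hib
    · simpa [hia] using Nat.one_le_iff_ne_zero.2 hb
    · simp [hia, hib]

theorem Pi.single_toNat_add_tsub_single_le {ι : Type*} [DecidableEq ι] {D : ι → ℕ} {b : ι}
    (ℓ : Bool) (hb : Pi.single b 1 ≤ D) : Pi.single b ℓ.toNat + (D - Pi.single b 1) ≤ D :=
  calc Pi.single b ℓ.toNat + (D - Pi.single b 1)
      ≤ Pi.single b 1 + (D - Pi.single b 1) := by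
        gcongr
        cases ℓ <;> simp
    _ = D := add_tsub_cancel_of_le hb

namespace KGH.KGraph

variable {k : ℕ} {Λ : KGraph k}

theorem splitAt_spec {f : Λ.Mor} {m : Fin k → ℕ} (h : m ≤ Λ.d f) :
    Λ.dom (Λ.splitAt f m).1 = Λ.cod (Λ.splitAt f m).2 ∧ Λ.d (Λ.splitAt f m).1 = m ∧
      Λ.d (Λ.splitAt f m).2 = Λ.d f - m ∧
      Λ.comp (Λ.splitAt f m).1 (Λ.splitAt f m).2 = f := by
  have hd : Λ.d f = m + (Λ.d f - m) := (add_tsub_cancel_of_le h).symm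
  rw [splitAt, dif_pos hd]
  exact (Classical.choose_spec (Λ.factor f m (Λ.d f - m) hd)).1

theorem splitAt_comp {p q : Λ.Mor} (h : Λ.dom p = Λ.cod q) :
    Λ.splitAt (Λ.comp p q) (Λ.d p) = (p, q) := by
  have hdpq : Λ.d (Λ.comp p q) = Λ.d p + Λ.d q := Λ.d_comp p q h
  have hd : Λ.d (Λ.comp p q) = Λ.d p + (Λ.d (Λ.comp p q) - Λ.d p) := by
    rw [hdpq, add_tsub_cancel_left]
  rw [splitAt, dif_pos hd]
  refine ((Classical.choose_spec (Λ.factor _ _ _ hd)).2 (p, q) ⟨h, rfl, ?_, rfl⟩).symm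
  rw [hdpq, add_tsub_cancel_left]

theorem seg_comp_comp {x g y : Λ.Mor} (hx : Λ.dom x = Λ.cod g) (hy : Λ.dom g = Λ.cod y) :
    Λ.seg (Λ.comp x (Λ.comp g y)) (Λ.d x) (Λ.d x + Λ.d g) = g := by
  rw [seg, splitAt_comp (by rwa [Λ.cod_comp g y hy]), add_tsub_cancel_left, splitAt_comp hy]

theorem exists_comp_seg {f : Λ.Mor} {m n : Fin k → ℕ} (h : m + n ≤ Λ.d f) :
    ∃ x y, Λ.dom x = Λ.cod (Λ.seg f m (m + n)) ∧ Λ.dom (Λ.seg f m (m + n)) = Λ.cod y ∧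
      Λ.d x = m ∧ Λ.d (Λ.seg f m (m + n)) = n ∧
      Λ.comp x (Λ.comp (Λ.seg f m (m + n)) y) = f := by
  obtain ⟨hpq, hdp, hdq, hf⟩ := splitAt_spec (le_of_add_le_left h)
  have hn : n ≤ Λ.d (Λ.splitAt f m).2 := hdq ▸ le_tsub_of_add_le_left h
  obtain ⟨huv, hdu, -, hq⟩ := splitAt_spec hn
  rw [seg, add_tsub_cancel_left]
  refine ⟨_, _, ?_, huv, hdp, hdu, by rw [hq, hf]⟩
  rw [hpq, ← Λ.cod_comp _ _ huv, hq]

theorem d_seg {f : Λ.Mor} {m n : Fin k → ℕ} (h : m + n ≤ Λ.d f) :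
    Λ.d (Λ.seg f m (m + n)) = n :=
  (exists_comp_seg h).choose_spec.choose_spec.2.2.2.1

theorem seg_seg {f : Λ.Mor} {m n m' n' : Fin k → ℕ} (h : m + n ≤ Λ.d f)
    (h' : m' + n' ≤ n) :
    Λ.seg (Λ.seg f m (m + n)) m' (m' + n') = Λ.seg f (m + m') (m + m' + n') := by
  obtain ⟨x, y, hx, hy, hdx, hdg, hf⟩ := exists_comp_seg h
  set g := Λ.seg f m (m + n)
  obtain ⟨x', y', hx', hy', hdx', hdg', hg⟩ := exists_comp_seg (f := g) (hdg ▸ h')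
  set g' := Λ.seg g m' (m' + n')
  have hx'g' : Λ.dom x' = Λ.cod (Λ.comp g' y') := by rwa [Λ.cod_comp _ _ hy']
  have hxx' : Λ.dom x = Λ.cod x' := by rw [hx, ← hg, Λ.cod_comp _ _ hx'g']
  have hg'y : Λ.dom (Λ.comp g' y') = Λ.cod y := by rw [← hy, ← hg, Λ.dom_comp _ _ hx'g']
  have hy'y : Λ.dom y' = Λ.cod y := by rwa [Λ.dom_comp _ _ hy'] at hg'y
  have hg'y'y : Λ.dom g' = Λ.cod (Λ.comp y' y) := by rwa [Λ.cod_comp _ _ hy'y]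
  have hx'y'y : Λ.dom x' = Λ.cod (Λ.comp g' (Λ.comp y' y)) := by rwa [Λ.cod_comp _ _ hg'y'y]
  have hf' : Λ.comp (Λ.comp x x') (Λ.comp g' (Λ.comp y' y)) = f := by
    rw [Λ.comp_assoc _ _ _ hxx' hx'y'y, ← Λ.comp_assoc _ _ _ hy' hy'y,
      ← Λ.comp_assoc _ _ _ hx'g' hg'y, hg, hf]
  have hseg := seg_comp_comp (by rwa [Λ.dom_comp _ _ hxx']) hg'y'y
  rw [hf', Λ.d_comp _ _ hxx', hdx, hdx', hdg'] at hseg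
  exact hseg.symm

/-- `F_j^ℓ`, indexed by the direction `b` it removes rather than by the position `j` of `b` among
the directions of the cube. -/
noncomputable def dirFace (Λ : KGraph k) (b : Fin k) (ℓ : Bool) (f : Λ.Mor) : Λ.Mor :=
  Λ.seg f (Pi.single b ℓ.toNat) (Pi.single b ℓ.toNat + (Λ.d f - Pi.single b 1))

theorem d_dirFace {f : Λ.Mor} {b : Fin k} (ℓ : Bool) (hb : Pi.single b 1 ≤ Λ.d f) :
    Λ.d (Λ.dirFace b ℓ f) = Λ.d f - Pi.single b 1 :=
  d_seg (Pi.single_toNat_add_tsub_single_le ℓ hb)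

theorem dirFace_comm {f : Λ.Mor} {a b : Fin k} (ℓ m : Bool)
    (hab : Pi.single a 1 + Pi.single b 1 ≤ Λ.d f) :
    Λ.dirFace a ℓ (Λ.dirFace b m f) = Λ.dirFace b m (Λ.dirFace a ℓ f) := by
  have ha : Pi.single a 1 ≤ Λ.d f := le_of_add_le_left hab
  have hb : Pi.single b 1 ≤ Λ.d f := le_of_add_le_right hab
  have ha' := Pi.single_toNat_add_tsub_single_le ℓ ha
  have hb' := Pi.single_toNat_add_tsub_single_le m hb
  simp only [dirFace]
  rw [d_seg hb', d_seg ha',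
    seg_seg hb' (Pi.single_toNat_add_tsub_single_le ℓ (le_tsub_of_add_le_right hab)),
    seg_seg ha' (Pi.single_toNat_add_tsub_single_le m (le_tsub_of_add_le_left hab)),
    add_comm (Pi.single b m.toNat : Fin k → ℕ), tsub_right_comm]

theorem suppList_nodup {f : Λ.Mor} : (Λ.suppList f).Nodup :=
  Finset.sort_nodup _ _

theorem mem_suppList {f : Λ.Mor} {b : Fin k} : b ∈ Λ.suppList f ↔ Λ.d f b ≠ 0 := by
  simp [suppList]

theorem single_le_of_mem_suppList {f : Λ.Mor} {b : Fin k} (hb : b ∈ Λ.suppList f) :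
    Pi.single b 1 ≤ Λ.d f := by
  intro i
  rw [Pi.single_apply]
  split_ifs with h
  · exact Nat.one_le_iff_ne_zero.2 (h ▸ mem_suppList.1 hb)
  · exact Nat.zero_le _

theorem face_eq_dirFace {f : Λ.Mor} {j : ℕ} {b : Fin k}
    (hb : (Λ.suppList f)[j - 1]? = some b) (ℓ : Bool) :
    Λ.face j ℓ f = Λ.dirFace b ℓ f := by
  have hle := single_le_of_mem_suppList (List.mem_of_getElem? hb)
  cases ℓ <;> simp [face, dirFace, hb, add_tsub_cancel_of_le hle]

theorem length_suppList {f : Λ.Mor} (h : ∀ i, Λ.d f i ≤ 1) :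
    (Λ.suppList f).length = Λ.deg f := by
  rw [suppList, Finset.length_sort, deg, Finset.card_filter]
  refine Finset.sum_congr rfl fun i _ => ?_
  have := h i
  split <;> omega

theorem suppList_of_d_eq {f g : Λ.Mor} {b : Fin k} (h : ∀ i, Λ.d f i ≤ 1)
    (hg : Λ.d g = Λ.d f - Pi.single b 1) :
    Λ.suppList g = (Λ.suppList f).erase b := by
  rw [suppList, suppList, ← Finset.sort_erase]
  congr 1
  ext i
  have := h i
  by_cases hib : i = b
  · subst hib
    simpa [hg] using Nat.sub_eq_zero_of_le this
  · simp [hg, hib]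

theorem suppList_dirFace_getElem {f : Λ.Mor} (h : ∀ i, Λ.d f i ≤ 1) {n : ℕ}
    (hn : n < (Λ.suppList f).length) (ℓ : Bool) :
    Λ.suppList (Λ.dirFace (Λ.suppList f)[n] ℓ f) = (Λ.suppList f).eraseIdx n := by
  rw [suppList_of_d_eq h (d_dirFace ℓ (single_le_of_mem_suppList (List.getElem_mem hn))),
    suppList_nodup.erase_getElem]

end KGH.KGraph

open KGH KGraph in
/-- the cubical relation for face maps of an `r`-cube:
`F_i^ℓ(F_j^m(λ)) = F_{j-1}^m(F_i^ℓ(λ))` for `1 ≤ i < j ≤ r`. -/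
theorem statement0 {k : ℕ} (Λ : KGraph k) (r : ℕ) (f : Λ.Mor) (hf : f ∈ Λ.QSet r)
    (i j : ℕ) (hi : 1 ≤ i) (hij : i < j) (hj : j ≤ r) (ℓ m : Bool) :
    Λ.face i ℓ (Λ.face j m f) = Λ.face (j - 1) m (Λ.face i ℓ f) := by
  obtain ⟨hcube, hdeg⟩ := hf
  set L := Λ.suppList f
  have hL : L.length = r := (length_suppList hcube).trans hdeg
  have hiL : i - 1 < L.length := by omega
  have hjL : j - 1 < L.length := by omega
  have hab : L[i - 1] ≠ L[j - 1] := fun h => by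
    have := suppList_nodup.getElem_inj_iff.1 h
    omega
  have hsum := Pi.single_one_add_single_one_le hab
    (mem_suppList.1 (List.getElem_mem hiL)) (mem_suppList.1 (List.getElem_mem hjL))
  have hi' : (Λ.suppList (Λ.dirFace L[j - 1] m f))[i - 1]? = some L[i - 1] := by
    rw [suppList_dirFace_getElem hcube hjL, List.getElem?_eraseIdx_of_lt (by omega),
      List.getElem?_eq_getElem hiL]
  have hj' : (Λ.suppList (Λ.dirFace L[i - 1] ℓ f))[j - 1 - 1]? = some L[j - 1] := by
    rw [suppList_dirFace_getElem hcube hiL, List.getElem?_eraseIdx_of_ge (by omega),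
      Nat.sub_add_cancel (by omega : 1 ≤ j - 1), List.getElem?_eq_getElem hjL]
  rw [face_eq_dirFace (List.getElem?_eq_getElem hjL),
    face_eq_dirFace (List.getElem?_eq_getElem hiL), face_eq_dirFace hi', face_eq_dirFace hj',
    dirFace_comm ℓ m hsum]
end

section
/- Let Λ be a k-graph with exactly p connected components (p finite or countably infinite). Then H₀(Λ) ≅ ℤ^p. In particular Λ is connected if and only if H₀(Λ) ≅ ℤ. -/
/-!
Every `0`-cube is an identity, so `C₀(Λ)` is free on the vertices and every `0`-chain is a
cycle. The boundary of a `1`-cube `e` is `s(e) - r(e)`; factoring an arbitrary morphism `λ`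
into `1`-cubes shows that `s(λ) - r(λ)` is a boundary as well. Hence the boundaries are exactly
the kernel of the map `ℤΛ⁰ → ℤπ₀(Λ)` sending a vertex to its component, and this map is
surjective since choosing a vertex in each component gives a section.
-/

theorem exists_eq_piSingle_of_sum_eq_one {ι : Type*} [Fintype ι] [DecidableEq ι] {v : ι → ℕ}
    (h : ∑ i, v i = 1) : ∃ i, v = Pi.single i 1 := by
  obtain ⟨i, hi⟩ := (Finsupp.sum_eq_one_iff (Finsupp.equivFunOnFinite.symm v)).mp
    (by simpa [Finsupp.sum_fintype] using h)
  exact ⟨i, by simpa [Finsupp.single_eq_pi_single] using congrArg (⇑) hi⟩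

theorem nonempty_finsupp_linearEquiv_self_iff {R α : Type*} [Ring R] [StrongRankCondition R]
    [Nonempty α] : Nonempty ((α →₀ R) ≃ₗ[R] R) ↔ Subsingleton α := by
  constructor
  · rintro ⟨e⟩
    have hrank := e.lift_rank_eq
    rw [rank_finsupp_self, Module.rank_self] at hrank
    simp only [Cardinal.lift_lift, Cardinal.lift_one, Cardinal.lift_eq_one] at hrank
    exact Cardinal.le_one_iff_subsingleton.mp hrank.le
  · intro
    obtain ⟨a⟩ := ‹Nonempty α›
    exact ⟨Finsupp.uniqueLinearEquiv R R a⟩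

namespace KGH.KGraph

open Finsupp

variable {k : ℕ} (Λ : KGraph k)

lemma splitAt_eq_of_factor {f : Λ.Mor} {m : Fin k → ℕ} (h : Λ.d f = m + (Λ.d f - m))
    {p : Λ.Mor × Λ.Mor}
    (hp : Λ.dom p.1 = Λ.cod p.2 ∧ Λ.d p.1 = m ∧ Λ.d p.2 = Λ.d f - m ∧ Λ.comp p.1 p.2 = f) :
    Λ.splitAt f m = p := by
  rw [splitAt, dif_pos h]
  exact ((Classical.choose_spec (Λ.factor f m (Λ.d f - m) h)).2 p hp).symm

lemma splitAt_d (f : Λ.Mor) : Λ.splitAt f (Λ.d f) = (f, Λ.idm (Λ.dom f)) :=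
  Λ.splitAt_eq_of_factor (by simp) ⟨(Λ.cod_idm _).symm, rfl, by simp [Λ.d_idm], Λ.comp_idm f⟩

lemma splitAt_zero (f : Λ.Mor) : Λ.splitAt f 0 = (Λ.idm (Λ.cod f), f) :=
  Λ.splitAt_eq_of_factor (by simp) ⟨Λ.dom_idm _, by simp [Λ.d_idm], by simp, Λ.idm_comp f⟩

lemma seg_d_d (f : Λ.Mor) : Λ.seg f (Λ.d f) (Λ.d f) = Λ.idm (Λ.dom f) := by
  rw [seg, splitAt_d, tsub_self, splitAt_zero, cod_idm]

lemma seg_zero_zero (f : Λ.Mor) : Λ.seg f 0 0 = Λ.idm (Λ.cod f) := by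
  rw [seg, splitAt_zero, tsub_self, splitAt_zero]

lemma eq_idm_cod_of_d_eq_zero {f : Λ.Mor} (h : Λ.d f = 0) : f = Λ.idm (Λ.cod f) := by
  obtain ⟨p, -, hu⟩ := Λ.factor f 0 0 (by simp [h])
  have h₁ := hu (f, Λ.idm (Λ.dom f)) ⟨(Λ.cod_idm _).symm, h, by simp [Λ.d_idm], Λ.comp_idm f⟩
  have h₂ := hu (Λ.idm (Λ.cod f), f) ⟨Λ.dom_idm _, by simp [Λ.d_idm], h, Λ.idm_comp f⟩
  exact congrArg Prod.fst (h₁.trans h₂.symm)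

lemma dom_eq_cod_of_d_eq_zero {f : Λ.Mor} (h : Λ.d f = 0) : Λ.dom f = Λ.cod f := by
  rw [Λ.eq_idm_cod_of_d_eq_zero h, dom_idm, cod_idm]

lemma deg_eq_zero_iff {f : Λ.Mor} : Λ.deg f = 0 ↔ Λ.d f = 0 := by
  simp [deg, Finset.sum_eq_zero_iff, funext_iff]

lemma deg_comp {f g : Λ.Mor} (h : Λ.dom f = Λ.cod g) :
    Λ.deg (Λ.comp f g) = Λ.deg f + Λ.deg g := by
  simp only [deg, Λ.d_comp f g h, Pi.add_apply, Finset.sum_add_distrib]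

lemma exists_d_eq_single_of_mem_QSet_one {f : Λ.Mor} (hf : f ∈ Λ.QSet 1) :
    ∃ i, Λ.d f = Pi.single i 1 :=
  exists_eq_piSingle_of_sum_eq_one hf.2

lemma mem_QSet_one_of_d_eq_single {f : Λ.Mor} {i : Fin k} (h : Λ.d f = Pi.single i 1) :
    f ∈ Λ.QSet 1 := by
  refine ⟨fun j => ?_, by simp [deg, h]⟩
  rcases eq_or_ne j i with rfl | hj <;> simp [*]

lemma suppList_eq_singleton {f : Λ.Mor} {i : Fin k} (h : Λ.d f = Pi.single i 1) :
    Λ.suppList f = [i] := by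
  have : (Finset.univ.filter fun j => Λ.d f j ≠ 0) = {i} := by
    ext j
    rcases eq_or_ne j i with rfl | hj <;> simp [Pi.single_apply, *]
  rw [suppList, this, Finset.sort_singleton]

lemma face_one_true_of_mem_QSet_one {f : Λ.Mor} (hf : f ∈ Λ.QSet 1) :
    Λ.face 1 true f = Λ.idm (Λ.dom f) := by
  obtain ⟨i, hi⟩ := Λ.exists_d_eq_single_of_mem_QSet_one hf
  rw [face, Λ.suppList_eq_singleton hi]
  change Λ.seg f (Pi.single i 1) (Λ.d f) = _
  rw [← hi, seg_d_d]

lemma face_one_false_of_mem_QSet_one {f : Λ.Mor} (hf : f ∈ Λ.QSet 1) :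
    Λ.face 1 false f = Λ.idm (Λ.cod f) := by
  obtain ⟨i, hi⟩ := Λ.exists_d_eq_single_of_mem_QSet_one hf
  rw [face, Λ.suppList_eq_singleton hi]
  change Λ.seg f 0 (Λ.d f - Pi.single i 1) = _
  rw [← hi, tsub_self, seg_zero_zero]

lemma bdFun_of_mem_QSet_one {f : Λ.Mor} (hf : f ∈ Λ.QSet 1) :
    Λ.bdFun f = single (Λ.idm (Λ.dom f)) 1 - single (Λ.idm (Λ.cod f)) 1 := by
  rw [bdFun, hf.2, Finset.sum_range_one, Λ.face_one_true_of_mem_QSet_one hf,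
    Λ.face_one_false_of_mem_QSet_one hf]
  simp only [zero_add, pow_one, pow_zero, neg_smul, one_smul]
  abel

lemma bd_single (f : Λ.Mor) (c : ℤ) : Λ.bd (single f c) = c • Λ.bdFun f := by
  simp [bd]

lemma cycles_zero_eq : Λ.cycles 0 = Λ.CS 0 := by
  refine le_antisymm inf_le_left (le_inf le_rfl fun x hx => ?_)
  rw [LinearMap.mem_ker, bd, lift_apply]
  refine Finset.sum_eq_zero fun f hf => ?_
  simp [bdFun, (hx hf).2]

lemma exists_comp_of_deg_eq_succ {f : Λ.Mor} {n : ℕ} (hf : Λ.deg f = n + 1) :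
    ∃ e g, e ∈ Λ.QSet 1 ∧ Λ.dom e = Λ.cod g ∧ Λ.deg g = n ∧ Λ.comp e g = f := by
  obtain ⟨i, hi⟩ : ∃ i, Λ.d f i ≠ 0 := by
    by_contra! h
    simp [deg, h] at hf
  have hsplit : Λ.d f = Pi.single i 1 + (Λ.d f - Pi.single i 1) := by
    funext j
    rcases eq_or_ne j i with rfl | hj <;> simp [*]
    omega
  obtain ⟨⟨e, g⟩, ⟨hdc, he, -, hcomp⟩, -⟩ := Λ.factor f _ _ hsplit
  have he₁ := Λ.mem_QSet_one_of_d_eq_single he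
  refine ⟨e, g, he₁, hdc, ?_, hcomp⟩
  have := Λ.deg_comp (f := e) (g := g) hdc
  rw [hcomp, hf, he₁.2] at this
  omega

lemma sub_single_idm_mem_bdries_zero_of_mem_QSet_one {e : Λ.Mor} (he : e ∈ Λ.QSet 1) :
    single (Λ.idm (Λ.dom e)) (1 : ℤ) - single (Λ.idm (Λ.cod e)) 1 ∈ Λ.bdries 0 := by
  have := Submodule.mem_map_of_mem (f := Λ.bd) (single_mem_supported ℤ (1 : ℤ) he)
  rwa [bd_single, one_smul, Λ.bdFun_of_mem_QSet_one he] at this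

lemma sub_single_idm_mem_bdries_zero (f : Λ.Mor) :
    single (Λ.idm (Λ.dom f)) (1 : ℤ) - single (Λ.idm (Λ.cod f)) 1 ∈ Λ.bdries 0 := by
  induction hn : Λ.deg f generalizing f with
  | zero => simp [Λ.dom_eq_cod_of_d_eq_zero (Λ.deg_eq_zero_iff.mp hn)]
  | succ n ih =>
    obtain ⟨e, g, he, hdc, hg, rfl⟩ := Λ.exists_comp_of_deg_eq_succ hn
    have := add_mem (ih g hg) (Λ.sub_single_idm_mem_bdries_zero_of_mem_QSet_one he)
    rwa [← hdc, sub_add_sub_cancel, ← Λ.dom_comp e g hdc, ← Λ.cod_comp e g hdc] at this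

lemma sub_single_idm_mem_bdries_zero_of_eqvGen {u v : Λ.Obj} (h : Relation.EqvGen Λ.rel u v) :
    single (Λ.idm u) (1 : ℤ) - single (Λ.idm v) 1 ∈ Λ.bdries 0 := by
  induction h with
  | rel u v huv =>
    obtain ⟨f, rfl, rfl⟩ := huv
    simpa using neg_mem (Λ.sub_single_idm_mem_bdries_zero f)
  | refl => simp
  | symm u v _ ih => simpa using neg_mem ih
  | trans u v w _ _ ih₁ ih₂ => simpa using add_mem ih₁ ih₂

/-- On `C₀(Λ)`, whose generators are the identities `idm v`, this sends `v` to its component. -/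
noncomputable def toComponents : Λ.Chain →ₗ[ℤ] (Quotient Λ.compSetoid →₀ ℤ) :=
  lmapDomain ℤ ℤ fun f => Quotient.mk Λ.compSetoid (Λ.cod f)

noncomputable def ofComponents : (Quotient Λ.compSetoid →₀ ℤ) →ₗ[ℤ] Λ.Chain :=
  lmapDomain ℤ ℤ fun q => Λ.idm q.out

lemma toComponents_comp_ofComponents : Λ.toComponents ∘ₗ Λ.ofComponents = LinearMap.id := by
  rw [toComponents, ofComponents, ← lmapDomain_comp]
  simp only [Function.comp_def, cod_idm, Quotient.out_eq]
  exact lmapDomain_id ℤ ℤ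

lemma ofComponents_mem_CS_zero (c : Quotient Λ.compSetoid →₀ ℤ) : Λ.ofComponents c ∈ Λ.CS 0 :=
  supported_comap_lmapDomain ℤ ℤ _ (Λ.QSet 0)
    (by simp [Set.preimage, QSet, deg, d_idm])

lemma toComponents_single (f : Λ.Mor) (c : ℤ) :
    Λ.toComponents (single f c) = single (Quotient.mk Λ.compSetoid (Λ.cod f)) c := by
  simp [toComponents]

lemma bdries_zero_le_ker_toComponents : Λ.bdries 0 ≤ LinearMap.ker Λ.toComponents := by
  rw [bdries, Submodule.map_le_iff_le_comap, CS, supported_eq_span_single, Submodule.span_le]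
  rintro _ ⟨f, hf, rfl⟩
  have hdom : Quotient.mk Λ.compSetoid (Λ.dom f) = Quotient.mk Λ.compSetoid (Λ.cod f) :=
    Quotient.sound (Relation.EqvGen.symm _ _ (Relation.EqvGen.rel _ _ ⟨f, rfl, rfl⟩))
  simp [bd_single, Λ.bdFun_of_mem_QSet_one hf, toComponents_single, cod_idm, hdom]

lemma sub_ofComponents_toComponents_mem_bdries_zero {x : Λ.Chain} (hx : x ∈ Λ.CS 0) :
    x - Λ.ofComponents (Λ.toComponents x) ∈ Λ.bdries 0 := by
  suffices Λ.CS 0 ≤ (Λ.bdries 0).comap (LinearMap.id - Λ.ofComponents ∘ₗ Λ.toComponents) from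
    this hx
  rw [CS, supported_eq_span_single, Submodule.span_le]
  rintro _ ⟨a, ha, rfl⟩
  have ha' : a = Λ.idm (Λ.cod a) := Λ.eq_idm_cod_of_d_eq_zero (Λ.deg_eq_zero_iff.mp ha.2)
  simp only [SetLike.mem_coe, Submodule.mem_comap, LinearMap.sub_apply, LinearMap.id_apply,
    LinearMap.comp_apply, toComponents_single, ofComponents, lmapDomain_apply, mapDomain_single]
  nth_rewrite 1 [ha']
  exact Λ.sub_single_idm_mem_bdries_zero_of_eqvGen
    (.symm _ _ (Quotient.mk_out (s := Λ.compSetoid) _))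

lemma ker_toComponents_comp_subtype :
    LinearMap.ker (Λ.toComponents ∘ₗ (Λ.cycles 0).subtype) =
      (Λ.bdries 0).comap (Λ.cycles 0).subtype := by
  ext ⟨x, hx⟩
  simp only [LinearMap.mem_ker, LinearMap.comp_apply, Submodule.coe_subtype, Submodule.mem_comap]
  constructor
  · intro h
    have := Λ.sub_ofComponents_toComponents_mem_bdries_zero (Λ.cycles_zero_eq ▸ hx)
    rwa [h, map_zero, sub_zero] at this
  · exact fun h => Λ.bdries_zero_le_ker_toComponents h

lemma toComponents_comp_subtype_surjective :
    Function.Surjective (Λ.toComponents ∘ₗ (Λ.cycles 0).subtype) := fun c =>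
  ⟨⟨Λ.ofComponents c, Λ.cycles_zero_eq ▸ Λ.ofComponents_mem_CS_zero c⟩,
    LinearMap.congr_fun Λ.toComponents_comp_ofComponents c⟩

noncomputable def hZeroEquivComponents : Λ.H 0 ≃ₗ[ℤ] (Quotient Λ.compSetoid →₀ ℤ) :=
  (Submodule.quotEquivOfEq _ _ Λ.ker_toComponents_comp_subtype.symm).trans
    (LinearMap.quotKerEquivOfSurjective _ Λ.toComponents_comp_subtype_surjective)

lemma connected_iff_subsingleton_components :
    Λ.Connected ↔ Subsingleton (Quotient Λ.compSetoid) := by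
  refine ⟨fun h => ⟨fun a b => ?_⟩, fun h u v => ?_⟩
  · induction a, b using Quotient.inductionOn₂ with
    | h u v => exact Quotient.sound (h u v)
  · exact Quotient.exact (Subsingleton.elim (Quotient.mk Λ.compSetoid u) _)

end KGH.KGraph

open KGH KGraph in
/-- `H₀(Λ)` is free abelian on the set of connected components of
`Λ`; if there are `p` components then `H₀(Λ) ≅ ℤ^p`; and `Λ` is connected iff
`H₀(Λ) ≅ ℤ`. -/
theorem statement7 {k : ℕ} (Λ : KGraph k) :
    Nonempty (Λ.H 0 ≃ₗ[ℤ] (Quotient Λ.compSetoid →₀ ℤ)) ∧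
    (∀ p : ℕ, 0 < p → Nat.card (Quotient Λ.compSetoid) = p →
      Nonempty (Λ.H 0 ≃ₗ[ℤ] (Fin p → ℤ))) ∧
    (Λ.Connected ↔ Nonempty (Λ.H 0 ≃ₗ[ℤ] ℤ)) := by
  let e := Λ.hZeroEquivComponents
  have : Nonempty (Quotient Λ.compSetoid) := Λ.nonempty.map (Quotient.mk _)
  refine ⟨⟨e⟩, fun p hp hcard => ?_, ?_⟩
  · have : Finite (Quotient Λ.compSetoid) := (Nat.card_pos_iff.mp (hcard ▸ hp)).2
    exact ⟨e.trans ((Finsupp.domLCongr (Finite.equivFinOfCardEq hcard)).trans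
      (Finsupp.linearEquivFunOnFinite ℤ ℤ (Fin p)))⟩
  · rw [connected_iff_subsingleton_components, ← nonempty_finsupp_linearEquiv_self_iff (R := ℤ)]
    exact ⟨fun ⟨f⟩ => ⟨e.trans f⟩, fun ⟨f⟩ => ⟨e.symm.trans f⟩⟩
end
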